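/- arXiv:1409.2408 — 4 statements merged into one kernel-verified Lean document; each statement's English description precedes it below -/
import Mathlib

section
/- Let n, m be natural numbers and let H_1, …, H_m be affine hyperplanes in ℝ^n, i.e. for each k there is a nonzero linear functional f_k on ℝ^n and a real constant c_k with H_k = {x ∈ ℝ^n | f_k(x) = c_k}. Then the set of connected components of ℝ^n \ ⋃_{1 ≤ k ≤ m} H_k is finite, and its cardinality is at most ∑_{i=0}^{n} binom(m, i). -/
/-!
A point off all hyperplanes has a sign vector recording on which side of each hyperplane it
lies. The sign vector is locally constant, hence constant on each region, and the points with a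
given sign vector form an intersection of open half-spaces, which is convex and so connected.
Hence regions correspond injectively to realizable sign vectors.

These are counted by deletion–restriction on the first hyperplane `H`: a realizable sign vector
of the remaining hyperplanes extends in two ways only if its cell meets `H`, and then it is
realizable for the arrangement induced on `H`, one dimension lower. With Pascal's rule this
gives the bound `∑_{i ≤ n} binom(m, i)` by induction on `m`.
-/

open Finset Module

section Arrangement

variable {ι E : Type*} [AddCommGroup E] [Module ℝ E]

noncomputable def signVector (f : ι → E →ₗ[ℝ] ℝ) (c : ι → ℝ) (x : E) :
    ι → Bool := fun k => decide (c k < f k x)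

def openCell (f : ι → E →ₗ[ℝ] ℝ) (c : ι → ℝ) (s : ι → Bool) : Set E :=
  {x | ∀ k, if s k then c k < f k x else f k x < c k}

def realizableSigns (f : ι → E →ₗ[ℝ] ℝ) (c : ι → ℝ) : Set (ι → Bool) :=
  {s | (openCell f c s).Nonempty}

variable {f : ι → E →ₗ[ℝ] ℝ} {c : ι → ℝ} {s : ι → Bool}

theorem mem_openCell_iff {x : E} :
    x ∈ openCell f c s ↔ (∀ k, f k x ≠ c k) ∧ signVector f c x = s := by
  simp only [openCell, signVector, Set.mem_ofPred_eq, funext_iff, ← forall_and]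
  refine forall_congr' fun k => ?_
  cases s k
  · simp only [Bool.false_eq_true, ↓reduceIte, decide_eq_false_iff_not, not_lt]
    exact ⟨fun h => ⟨h.ne, h.le⟩, fun h => h.2.lt_of_ne h.1⟩
  · simp only [↓reduceIte, decide_eq_true_eq]
    exact ⟨fun h => ⟨h.ne', h⟩, And.right⟩

theorem mem_openCell_signVector {x : E} (hx : ∀ k, f k x ≠ c k) :
    x ∈ openCell f c (signVector f c x) :=
  mem_openCell_iff.2 ⟨hx, rfl⟩

theorem mem_complement_hyperplanes_iff {x : E} :
    x ∈ Set.univ \ ⋃ k, {x | f k x = c k} ↔ ∀ k, f k x ≠ c k := by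
  simp

theorem convex_openCell : Convex ℝ (openCell f c s) := by
  rw [openCell, Set.ofPred_forall]
  refine convex_iInter fun k => ?_
  cases s k
  · exact convex_halfSpace_lt (f k).isLinear _
  · exact convex_halfSpace_gt (f k).isLinear _

theorem mem_openCell_ker {L : E →ₗ[ℝ] ℝ} {x₀ z : E} (hz : L z = L x₀)
    (h : z ∈ openCell f c s) :
    (⟨z - x₀, by simp [hz]⟩ : LinearMap.ker L) ∈
      openCell (fun k => (f k).comp (LinearMap.ker L).subtype) (fun k => c k - f k x₀) s :=
  fun k => by simpa using h k

end Arrangement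

section DeletionRestriction

variable {E : Type*} [AddCommGroup E] [Module ℝ E] {m : ℕ}
  {f : Fin (m + 1) → E →ₗ[ℝ] ℝ} {c : Fin (m + 1) → ℝ}

theorem exists_mem_openCell_tail_eq {s : Fin m → Bool} {x y : E}
    (hx : x ∈ openCell f c (Fin.cons true s)) (hy : y ∈ openCell f c (Fin.cons false s)) :
    ∃ z ∈ openCell (Fin.tail f) (Fin.tail c) s, f 0 z = c 0 := by
  have hx₀ : c 0 < f 0 x := by simpa using hx 0
  have hy₀ : f 0 y < c 0 := by simpa using hy 0
  have hxs : x ∈ openCell (Fin.tail f) (Fin.tail c) s := fun k => by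
    simpa [Fin.tail] using hx k.succ
  have hys : y ∈ openCell (Fin.tail f) (Fin.tail c) s := fun k => by
    simpa [Fin.tail] using hy k.succ
  -- `t ↦ f 0 (x + t • (y - x))`, expanded so that `fun_prop` sees its continuity
  obtain ⟨t, ht, hft⟩ : c 0 ∈ (fun t : ℝ => f 0 x + t * (f 0 y - f 0 x)) '' Set.Icc 0 1 :=
    intermediate_value_Icc' zero_le_one (by fun_prop : Continuous _).continuousOn
      ⟨by simp [hy₀.le], by simp [hx₀.le]⟩
  refine ⟨x + t • (y - x), convex_openCell.segment_subset hxs hys ?_, by simpa using hft⟩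
  rw [segment_eq_image']
  exact ⟨t, ht, rfl⟩

theorem inter_subset_realizableSigns_ker {x₀ : E} (hx₀ : f 0 x₀ = c 0) :
    {s | Fin.cons true s ∈ realizableSigns f c} ∩
        {s | Fin.cons false s ∈ realizableSigns f c} ⊆
      realizableSigns (fun k => (f k.succ).comp (LinearMap.ker (f 0)).subtype)
        (fun k => c k.succ - f k.succ x₀) := by
  rintro s ⟨⟨x, hx⟩, ⟨y, hy⟩⟩
  obtain ⟨z, hz, hz₀⟩ := exists_mem_openCell_tail_eq hx hy
  exact ⟨_, mem_openCell_ker (hz₀.trans hx₀.symm) hz⟩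

end DeletionRestriction

theorem Set.ncard_eq_ncard_cons_true_add {m : ℕ} (S : Set (Fin (m + 1) → Bool)) :
    S.ncard = {s | Fin.cons true s ∈ S}.ncard + {s | Fin.cons false s ∈ S}.ncard := by
  have hS : S = Fin.cons true '' {s | Fin.cons true s ∈ S} ∪
      Fin.cons false '' {s | Fin.cons false s ∈ S} := by
    ext s
    constructor
    · intro hs
      have hs' := Fin.cons_self_tail s
      cases h : s 0 <;> rw [h] at hs'
      · exact Or.inr ⟨Fin.tail s, by rwa [Set.mem_ofPred_eq, hs'], hs'⟩
      · exact Or.inl ⟨Fin.tail s, by rwa [Set.mem_ofPred_eq, hs'], hs'⟩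
    · rintro (⟨t, ht, rfl⟩ | ⟨t, ht, rfl⟩) <;> exact ht
  have hdisj : Disjoint (Fin.cons true '' {s | Fin.cons true s ∈ S})
      (Fin.cons false '' {s | Fin.cons false s ∈ S} : Set (Fin (m + 1) → Bool)) := by
    refine Set.disjoint_left.2 ?_
    rintro _ ⟨t, -, rfl⟩ ⟨u, -, h⟩
    simpa using congr_fun h 0
  conv_lhs => rw [hS]
  rw [Set.ncard_union_eq hdisj, Set.ncard_image_of_injective _ (Fin.cons_right_injective _),
    Set.ncard_image_of_injective _ (Fin.cons_right_injective _)]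

theorem Nat.sum_range_choose_succ_eq (m n : ℕ) :
    ∑ i ∈ range (n + 1), (m + 1).choose i =
      ∑ i ∈ range (n + 1), m.choose i + ∑ i ∈ range n, m.choose i := by
  rw [sum_range_succ', sum_range_succ' (fun i => m.choose i)]
  simp only [Nat.choose_succ_succ, sum_add_distrib, Nat.choose_zero_right]
  ring

theorem ncard_realizableSigns_le {E : Type*} [AddCommGroup E] [Module ℝ E]
    [FiniteDimensional ℝ E] {m n : ℕ} (hE : finrank ℝ E ≤ n)
    (f : Fin m → E →ₗ[ℝ] ℝ) (c : Fin m → ℝ) :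
    (realizableSigns f c).ncard ≤ ∑ i ∈ range (n + 1), m.choose i := by
  induction m generalizing E n with
  | zero => exact (Set.ncard_le_one_of_subsingleton _).trans (by simp [sum_range_succ'])
  | succ m ih =>
    set S := realizableSigns f c
    have hunion : {s | Fin.cons true s ∈ S} ∪ {s | Fin.cons false s ∈ S} ⊆
        realizableSigns (Fin.tail f) (Fin.tail c) := by
      rintro s (⟨x, hx⟩ | ⟨x, hx⟩) <;>
        exact ⟨x, fun k => by simpa [Fin.tail] using hx k.succ⟩
    have hinter : ({s | Fin.cons true s ∈ S} ∩ {s | Fin.cons false s ∈ S}).ncard ≤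
        ∑ i ∈ range n, m.choose i := by
      rcases Set.eq_empty_or_nonempty ({s | Fin.cons true s ∈ S} ∩ {s | Fin.cons false s ∈ S})
        with hT | ⟨s, ⟨x, hx⟩, ⟨y, hy⟩⟩
      · simp [hT]
      have hf₀ : f 0 ≠ 0 := fun h => by
        have hx₀ : c 0 < f 0 x := by simpa using hx 0
        have hy₀ : f 0 y < c 0 := by simpa using hy 0
        simp only [h, LinearMap.zero_apply] at hx₀ hy₀
        linarith
      obtain ⟨x₀, -, hx₀⟩ := exists_mem_openCell_tail_eq hx hy
      have hker := Module.Dual.finrank_ker_add_one_of_ne_zero hf₀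
      obtain ⟨n, rfl⟩ := Nat.exists_eq_add_one.2 (by omega : 0 < n)
      exact (Set.ncard_le_ncard (inter_subset_realizableSigns_ker hx₀)).trans (ih (by omega) _ _)
    calc S.ncard = {s | Fin.cons true s ∈ S}.ncard + {s | Fin.cons false s ∈ S}.ncard :=
          Set.ncard_eq_ncard_cons_true_add S
      _ = ({s | Fin.cons true s ∈ S} ∪ {s | Fin.cons false s ∈ S}).ncard +
          ({s | Fin.cons true s ∈ S} ∩ {s | Fin.cons false s ∈ S}).ncard :=
          (Set.ncard_union_add_ncard_inter _ _).symm
      _ ≤ ∑ i ∈ range (n + 1), m.choose i + ∑ i ∈ range n, m.choose i :=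
          add_le_add ((Set.ncard_le_ncard hunion).trans (ih hE _ _)) hinter
      _ = ∑ i ∈ range (n + 1), (m + 1).choose i := (Nat.sum_range_choose_succ_eq m n).symm

section Regions

variable {ι E : Type*} [Finite ι] [AddCommGroup E] [Module ℝ E] [TopologicalSpace E]
  [IsTopologicalAddGroup E] [ContinuousSMul ℝ E] [T2Space E] [FiniteDimensional ℝ E]
  {f : ι → E →ₗ[ℝ] ℝ} {c : ι → ℝ}

theorem isOpen_openCell (s : ι → Bool) : IsOpen (openCell f c s) := by
  rw [openCell, Set.ofPred_forall]
  refine isOpen_iInter_of_finite fun k => ?_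
  have hf := (f k).continuous_of_finiteDimensional
  cases s k
  · exact isOpen_lt hf continuous_const
  · exact isOpen_lt continuous_const hf

theorem continuous_signVector_subtype :
    Continuous fun x : ↥(Set.univ \ ⋃ k, {x | f k x = c k}) => signVector f c x := by
  refine continuous_discrete_rng.2 fun s => ?_
  convert (isOpen_openCell (f := f) (c := c) s).preimage continuous_subtype_val using 1
  ext x
  simp [mem_openCell_iff, mem_complement_hyperplanes_iff.1 x.2]

theorem injective_connectedComponentsLift_signVector :
    Function.Injective
      (continuous_signVector_subtype (f := f) (c := c)).connectedComponentsLift := by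
  intro a b hab
  obtain ⟨p, rfl⟩ := ConnectedComponents.surjective_coe a
  obtain ⟨q, rfl⟩ := ConnectedComponents.surjective_coe b
  simp only [Continuous.connectedComponentsLift_apply_coe] at hab
  set K := openCell f c (signVector f c p)
  have hKU : K ⊆ Set.univ \ ⋃ k, {x | f k x = c k} := fun x hx =>
    mem_complement_hyperplanes_iff.2 (mem_openCell_iff.1 hx).1
  have hp : (p : E) ∈ K := mem_openCell_signVector (mem_complement_hyperplanes_iff.1 p.2)
  have hq : (q : E) ∈ K := mem_openCell_iff.2 ⟨mem_complement_hyperplanes_iff.1 q.2, hab.symm⟩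
  have := Subtype.preconnectedSpace (convex_openCell (f := f) (c := c)
    (s := signVector f c p)).isPreconnected
  refine ConnectedComponents.coe_eq_coe.2 (connectedComponent_eq ?_)
  exact (isPreconnected_range (continuous_inclusion hKU)).subset_connectedComponent
    ⟨⟨p, hp⟩, rfl⟩ ⟨⟨q, hq⟩, rfl⟩

theorem nat_card_connectedComponents_le_ncard_realizableSigns :
    Nat.card (ConnectedComponents ↥(Set.univ \ ⋃ k, {x | f k x = c k})) ≤
      (realizableSigns f c).ncard := by
  have hinj := injective_connectedComponentsLift_signVector (f := f) (c := c)
  rw [← Nat.card_range_of_injective hinj, Nat.card_coe_set_eq]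
  refine Set.ncard_le_ncard ?_
  rintro _ ⟨a, rfl⟩
  obtain ⟨p, rfl⟩ := ConnectedComponents.surjective_coe a
  rw [Continuous.connectedComponentsLift_apply_coe]
  exact ⟨p, mem_openCell_signVector (mem_complement_hyperplanes_iff.1 p.2)⟩

end Regions

theorem regions_card_le_general
    (n m : ℕ)
    (f : Fin m → ((Fin n → ℝ) →ₗ[ℝ] ℝ))
    (c : Fin m → ℝ) :
    Finite (ConnectedComponents
      ↥((Set.univ : Set (Fin n → ℝ)) \ ⋃ k, {x | f k x = c k})) ∧
    Nat.card (ConnectedComponents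
      ↥((Set.univ : Set (Fin n → ℝ)) \ ⋃ k, {x | f k x = c k}))
      ≤ ∑ i ∈ Finset.range (n + 1), Nat.choose m i :=
  ⟨Finite.of_injective _ injective_connectedComponentsLift_signVector,
    nat_card_connectedComponents_le_ncard_realizableSigns.trans
      (ncard_realizableSigns_le (Module.finrank_fin_fun ℝ).le f c)⟩

/-- The number of regions (connected components of the complement of a
finite family of affine hyperplanes in ℝ^n) is finite and bounded by
∑_{i=0}^{n} binom(m, i). -/
theorem regions_card_le
    (n m : ℕ)
    (f : Fin m → ((Fin n → ℝ) →ₗ[ℝ] ℝ))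
    (hf : ∀ k, f k ≠ 0)
    (c : Fin m → ℝ) :
    Finite (ConnectedComponents
      ↥((Set.univ : Set (Fin n → ℝ)) \ ⋃ k, {x | f k x = c k})) ∧
    Nat.card (ConnectedComponents
      ↥((Set.univ : Set (Fin n → ℝ)) \ ⋃ k, {x | f k x = c k}))
      ≤ ∑ i ∈ Finset.range (n + 1), Nat.choose m i :=
  regions_card_le_general n m f c
end

section
/- For all natural numbers n and m with m ≥ 1, the inequality ∑_{p=0}^{n} binom(m, p) · ∑_{i=0}^{n−p} binom(m−p, i) ≤ e² · mⁿ holds, where e is the base of the natural logarithm. -/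
/-!
Bound `binom(a, i) ≤ aⁱ / i!`. For `a ≤ m` and `i ≤ N` this is at most `m^N / i!` (as `m ≥ 1`), so
the inner sum is at most `e · m^(n-p)`, the `p`-th summand at most `e · mⁿ / p!`, and summing
`1 / p!` over `p` contributes the second factor `e`.
-/

open Finset Nat Real

lemma sum_range_inv_factorial_le_exp_one (N : ℕ) : ∑ i ∈ range N, (1 : ℝ) / i ! ≤ exp 1 := by
  simpa using sum_le_exp_of_nonneg zero_le_one N

lemma sum_range_choose_le_pow_mul_exp_one {x : ℝ} (hx : 1 ≤ x) {a : ℕ} (ha : (a : ℝ) ≤ x)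
    (N : ℕ) : ∑ i ∈ range (N + 1), (a.choose i : ℝ) ≤ x ^ N * exp 1 := by
  calc ∑ i ∈ range (N + 1), (a.choose i : ℝ)
      ≤ ∑ i ∈ range (N + 1), x ^ N * (1 / i !) := by
        refine sum_le_sum fun i hi => ?_
        have hiN : i ≤ N := Nat.lt_succ_iff.mp (mem_range.mp hi)
        calc (a.choose i : ℝ) ≤ (a : ℝ) ^ i / i ! := choose_le_pow_div i a
          _ ≤ x ^ i / i ! := by gcongr
          _ ≤ x ^ N / i ! := by gcongr
          _ = x ^ N * (1 / i !) := by ring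
    _ = x ^ N * ∑ i ∈ range (N + 1), (1 : ℝ) / i ! := (mul_sum ..).symm
    _ ≤ x ^ N * exp 1 := by
        gcongr
        exact sum_range_inv_factorial_le_exp_one _

lemma choose_mul_sum_choose_sub_le {m p n : ℕ} (hm : 1 ≤ m) (hpn : p ≤ n) :
    (m.choose p : ℝ) * ∑ i ∈ range (n - p + 1), ((m - p).choose i : ℝ)
      ≤ exp 1 * m ^ n * (1 / p !) := by
  have hm' : (1 : ℝ) ≤ m := by exact_mod_cast hm
  have hsub : ((m - p : ℕ) : ℝ) ≤ m := by exact_mod_cast Nat.sub_le m p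
  calc (m.choose p : ℝ) * ∑ i ∈ range (n - p + 1), ((m - p).choose i : ℝ)
      ≤ ((m : ℝ) ^ p / p !) * ((m : ℝ) ^ (n - p) * exp 1) := by
        gcongr
        · exact choose_le_pow_div p m
        · exact sum_range_choose_le_pow_mul_exp_one hm' hsub _
    _ = exp 1 * ((m : ℝ) ^ p * (m : ℝ) ^ (n - p)) * (1 / p !) := by ring
    _ = exp 1 * m ^ n * (1 / p !) := by rw [← pow_add, Nat.add_sub_cancel' hpn]

/-- For m ≥ 1, ∑_{p=0}^{n} binom(m,p) · ∑_{i=0}^{n−p} binom(m−p,i) ≤ e² · mⁿ. -/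
theorem sum_binom_le_exp_two_mul_pow
    (n m : ℕ) (hm : 1 ≤ m) :
    ((∑ p ∈ Finset.range (n + 1),
        Nat.choose m p *
          ∑ i ∈ Finset.range (n - p + 1), Nat.choose (m - p) i : ℕ) : ℝ)
      ≤ Real.exp 2 * (m : ℝ) ^ n := by
  push_cast
  calc ∑ p ∈ range (n + 1), (m.choose p : ℝ) * ∑ i ∈ range (n - p + 1), ((m - p).choose i : ℝ)
      ≤ ∑ p ∈ range (n + 1), exp 1 * m ^ n * (1 / p !) :=
        sum_le_sum fun p hp =>
          choose_mul_sum_choose_sub_le hm (Nat.lt_succ_iff.mp (mem_range.mp hp))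
    _ = exp 1 * m ^ n * ∑ p ∈ range (n + 1), (1 : ℝ) / p ! := (mul_sum ..).symm
    _ ≤ exp 1 * m ^ n * exp 1 := by
        gcongr
        exact sum_range_inv_factorial_le_exp_one _
    _ = exp 2 * m ^ n := by rw [show (2 : ℝ) = 1 + 1 by norm_num, exp_add]; ring
end

section
/- Let n be a natural number with n ≥ 2, let U and A be real numbers with U ≥ 2 and A ≥ 1, and let p : {1, …, n} → ℝ be a sequence of nonnegative reals satisfying: (i) p(n) ≤ A · U^(2^n), and (ii) for every k with 1 ≤ k < n, p(k) ≤ (A + U · ∑_{j=k+1}^{n} p(j)·(p(j) − 1)/2) · U^(2^k). Then for every k with 1 ≤ k ≤ n, p(k) ≤ A^(2^(n−k)) · U^(2^(n·(n−k+1))). -/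
/-!
Downward induction on `k`, proving `p k ≤ levelBound n A U (n - k)`. Every `p j` with `j > k`
is below `L = levelBound n A U (n - k - 1)`, and squaring `L` doubles both exponents; the
quadratic sum is therefore at most `(n - k) · A^(2^(n-k)) · U^(2^(n(n-k)+1))`. The remaining
factors `n - k + 1`, `U` and `U^(2^k)` are absorbed into `U^(2^(n(n-k+1)))` because
`2^(n(n-k+1)) = 2^n · 2^(n(n-k))` leaves room for `2^(n(n-k)+1) + 2^k + n + 1`.
-/

/-- The bound on `p k`, indexed by the distance `d = n - k` to the top level. -/
def levelBound (n : ℕ) (A U : ℝ) (d : ℕ) : ℝ :=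
  A ^ 2 ^ d * U ^ 2 ^ (n * (d + 1))

lemma levelBound_mono {n : ℕ} {A U : ℝ} (hA : 1 ≤ A) (hU : 1 ≤ U) {d e : ℕ} (hde : d ≤ e) :
    levelBound n A U d ≤ levelBound n A U e := by
  unfold levelBound
  gcongr <;> omega

lemma levelBound_sq (n : ℕ) (A U : ℝ) (d : ℕ) :
    levelBound n A U d ^ 2 = A ^ 2 ^ (d + 1) * U ^ 2 ^ (n * (d + 1) + 1) := by
  simp only [levelBound, mul_pow, ← pow_mul, pow_succ 2]

lemma add_one_add_two_pow_le_two_pow_mul {n m k : ℕ} (hn : 2 ≤ n) (hm : 1 ≤ m) (hk : k ≤ n) :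
    n + 1 + 2 ^ (n * m + 1) + 2 ^ k ≤ 2 ^ (n * (m + 1)) := by
  have hnm : n ≤ n * m := Nat.le_mul_of_pos_right n hm
  have h1 : n + 1 ≤ 2 ^ (n * m) := Nat.lt_two_pow_self.trans_le (Nat.pow_le_pow_right two_pos hnm)
  have h2 : 2 ^ k ≤ 2 ^ (n * m) := Nat.pow_le_pow_right two_pos (hk.trans hnm)
  have h4 : 4 ≤ 2 ^ n := Nat.pow_le_pow_right two_pos hn
  rw [mul_add, mul_one, pow_succ, pow_add 2 (n * m) n]
  nlinarith

lemma natCast_le_pow {U : ℝ} (hU : 2 ≤ U) (n : ℕ) : (n : ℝ) ≤ U ^ n := by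
  have h := one_add_mul_le_pow (show (-2 : ℝ) ≤ U - 1 by linarith) n
  rw [add_sub_cancel] at h
  nlinarith

lemma sum_mul_sub_one_div_two_le {ι : Type*} (s : Finset ι) (f : ι → ℝ) {B : ℝ}
    (hf : ∀ j ∈ s, 0 ≤ f j ∧ f j ≤ B) :
    ∑ j ∈ s, f j * (f j - 1) / 2 ≤ s.card * B ^ 2 := by
  rw [← nsmul_eq_mul]
  refine Finset.sum_le_card_nsmul s _ _ fun j hj => ?_
  obtain ⟨h0, hB⟩ := hf j hj
  nlinarith

/-- One level of the recurrence: `m` levels above `k`, each of size at most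
`levelBound n A U (m - 1)`, produce the bound `levelBound n A U m` at level `k`. -/
lemma levelBound_step {n k m : ℕ} {A U : ℝ} (hn : 2 ≤ n) (hU : 2 ≤ U) (hA : 1 ≤ A)
    (hm : 1 ≤ m) (hmn : m + 1 ≤ n) (hk : k ≤ n) :
    (A + U * (m * levelBound n A U (m - 1) ^ 2)) * U ^ 2 ^ k ≤ levelBound n A U m := by
  obtain ⟨e, rfl⟩ : ∃ e, m = e + 1 := ⟨m - 1, by omega⟩
  rw [Nat.add_sub_cancel, levelBound_sq]
  set C := A ^ 2 ^ (e + 1)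
  set V := U ^ 2 ^ (n * (e + 1) + 1)
  have hAC : A ≤ C := le_self_pow₀ hA (by positivity)
  have hV : 1 ≤ V := one_le_pow₀ (by linarith)
  have hUV : 1 ≤ U * V := one_le_mul_of_one_le_of_one_le (by linarith) hV
  have hm' : ((e + 1 : ℕ) : ℝ) + 1 ≤ U ^ n :=
    le_trans (by exact_mod_cast hmn) (natCast_le_pow hU n)
  have hexp : U ^ n * (U * V) * U ^ 2 ^ k ≤ U ^ 2 ^ (n * (e + 1 + 1)) := by
    rw [← pow_succ', ← pow_add, ← pow_add]
    exact pow_le_pow_right₀ (by linarith) (by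
      have := add_one_add_two_pow_le_two_pow_mul hn (Nat.le_add_left 1 e) hk; omega)
  calc (A + U * ((e + 1 : ℕ) * (C * V))) * U ^ 2 ^ k
      ≤ C * ((((e + 1 : ℕ) : ℝ) + 1) * (U * V)) * U ^ 2 ^ k := by
        gcongr
        nlinarith [mul_le_mul hAC hUV zero_le_one (by positivity : (0 : ℝ) ≤ C)]
    _ ≤ C * (U ^ n * (U * V) * U ^ 2 ^ k) := by
        rw [mul_assoc C]; gcongr
    _ ≤ levelBound n A U (e + 1) := by
        unfold levelBound; gcongr

/-- Arithmetic content of the size analysis of the saturation procedure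
(Lemma `terminate`): the recurrence on the sizes p(k) of the expression
sets implies p(k) ≤ A^(2^(n−k)) · U^(2^(n·(n−k+1))). -/
theorem saturation_size_bound
    (n : ℕ) (hn : 2 ≤ n)
    (U A : ℝ) (hU : 2 ≤ U) (hA : 1 ≤ A)
    (p : ℕ → ℝ)
    (hpos : ∀ k, 1 ≤ k → k ≤ n → 0 ≤ p k)
    (htop : p n ≤ A * U ^ (2 ^ n))
    (hrec : ∀ k, 1 ≤ k → k < n →
      p k ≤ (A + U * ∑ j ∈ Finset.Icc (k + 1) n, p j * (p j - 1) / 2)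
              * U ^ (2 ^ k)) :
    ∀ k, 1 ≤ k → k ≤ n →
      p k ≤ A ^ (2 ^ (n - k)) * U ^ (2 ^ (n * (n - k + 1))) := by
  intro k hk1 hkn
  induction hd : n - k using Nat.strong_induction_on generalizing k with
  | _ d ih =>
    change p k ≤ levelBound n A U d
    rcases hkn.eq_or_lt with rfl | hkn
    · simpa [levelBound, ← hd] using htop
    have hlevels : ∀ j ∈ Finset.Icc (k + 1) n, 0 ≤ p j ∧ p j ≤ levelBound n A U (d - 1) := by
      intro j hj
      obtain ⟨hkj, hjn⟩ := Finset.mem_Icc.mp hj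
      refine ⟨hpos j (by omega) hjn, ?_⟩
      exact (ih (n - j) (by omega) j (by omega) hjn rfl).trans
        (levelBound_mono hA (by linarith) (by omega))
    have hcard : ((Finset.Icc (k + 1) n).card : ℝ) = d := by
      rw [Nat.card_Icc, ← hd]; norm_cast; omega
    calc p k ≤ _ := hrec k hk1 hkn
      _ ≤ (A + U * (d * levelBound n A U (d - 1) ^ 2)) * U ^ 2 ^ k := by
        gcongr
        simpa only [hcard] using sum_mul_sub_one_div_two_le _ p hlevels
      _ ≤ levelBound n A U d := levelBound_step hn hU hA (by omega) (by omega) hkn.le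
end

section
/- Let n be a natural number and let b : ℕ → ℕ be a sequence such that for every k < n, b(k+1) ≤ (n − k + 1)² · (4 · b(k) + 2^(n−k+1) · b(0)). Then b(n) ≤ ((n+1)!)² · (n+1) · 2^(3n+1) · b(0); more precisely, for every k ≤ n one has b(k) ≤ (∏_{j=1}^{k} (n + 2 − j))² · (k+1) · 2^(n+2k+1) · b(0). -/
/-!
Write `D k = (n+1)(n)⋯(n+2-k)` for the descending factorial `(n+1).descFactorial k`, so that
`D (k+1) = (n-k+1) · D k`. By induction on `k`, `b k ≤ D k² · (k+1) · 2^(n+2k+1) · b 0`: in the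
step, `4 · b k` contributes `k+1` copies of `D k² · 2^(n+2k+3) · b 0`, and since `D k ≥ 1` and
`n-k+1 ≤ n+2k+3` the additive term `2^(n-k+1) · b 0` is at most one more copy. For `k = n` the
descending factorial is `(n+1)!`.
-/

open Nat Finset

theorem prod_Icc_add_one_sub_eq_descFactorial (m k : ℕ) :
    ∏ j ∈ Icc 1 k, (m + 1 - j) = m.descFactorial k := by
  induction k with
  | zero => simp
  | succ k ih =>
    rw [prod_Icc_succ_top (by omega), ih, descFactorial_succ, mul_comm]
    congr 1
    omega

theorem descFactorial_succ_self (n : ℕ) : (n + 1).descFactorial n = (n + 1)! := by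
  simpa using factorial_mul_descFactorial (Nat.le_succ n)

theorem le_sq_descFactorial_mul_of_rec {n : ℕ} {b : ℕ → ℕ}
    (hrec : ∀ k, k < n → b (k + 1) ≤ (n - k + 1) ^ 2 * (4 * b k + 2 ^ (n - k + 1) * b 0)) :
    ∀ k, k ≤ n → b k ≤ ((n + 1).descFactorial k) ^ 2 * (k + 1) * 2 ^ (n + 2 * k + 1) * b 0 := by
  intro k hk
  induction k with
  | zero => simpa using Nat.le_mul_of_pos_left (b 0) (Nat.two_pow_pos (n + 1))
  | succ k ih =>
    set D := (n + 1).descFactorial k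
    set B := D ^ 2 * 2 ^ (n + 2 * k + 3) * b 0
    have hD : 1 ≤ D ^ 2 := Nat.one_le_pow _ _ (descFactorial_pos.mpr (by omega))
    have hbk : 4 * b k ≤ (k + 1) * B := by
      have := ih (by omega)
      calc 4 * b k ≤ 4 * (D ^ 2 * (k + 1) * 2 ^ (n + 2 * k + 1) * b 0) := by gcongr
        _ = (k + 1) * B := by ring
    have hb0 : 2 ^ (n - k + 1) * b 0 ≤ B :=
      calc 2 ^ (n - k + 1) * b 0 ≤ 1 * 2 ^ (n + 2 * k + 3) * b 0 := by
            rw [one_mul]; gcongr <;> omega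
        _ ≤ B := Nat.mul_le_mul_right _ (Nat.mul_le_mul_right _ hD)
    calc b (k + 1) ≤ (n - k + 1) ^ 2 * (4 * b k + 2 ^ (n - k + 1) * b 0) := hrec k hk
      _ ≤ (n - k + 1) ^ 2 * ((k + 1) * B + B) := by gcongr
      _ = ((n + 1 - k) * D) ^ 2 * (k + 1 + 1) * 2 ^ (n + 2 * (k + 1) + 1) * b 0 := by
        rw [show n + 1 - k = n - k + 1 by omega]
        ring
      _ = _ := by rw [descFactorial_succ]

/-- Arithmetic core of the total bit-size bound in the parametric
saturation procedure (Lemma `psize`): if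
b(k+1) ≤ (n−k+1)²·(4·b(k) + 2^(n−k+1)·b(0)) for every k < n, then
b(n) ≤ ((n+1)!)²·(n+1)·2^(3n+1)·b(0), and more precisely, for every k ≤ n,
b(k) ≤ (∏_{j=1}^{k} (n+2−j))²·(k+1)·2^(n+2k+1)·b(0). -/
theorem parametric_bits_bound
    (n : ℕ) (b : ℕ → ℕ)
    (hrec : ∀ k, k < n →
      b (k + 1) ≤ (n - k + 1) ^ 2 * (4 * b k + 2 ^ (n - k + 1) * b 0)) :
    b n ≤ (Nat.factorial (n + 1)) ^ 2 * (n + 1) * 2 ^ (3 * n + 1) * b 0 ∧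
    ∀ k, k ≤ n →
      b k ≤ (∏ j ∈ Finset.Icc 1 k, (n + 2 - j)) ^ 2
              * (k + 1) * 2 ^ (n + 2 * k + 1) * b 0 := by
  have hbound := le_sq_descFactorial_mul_of_rec hrec
  refine ⟨?_, fun k hk => ?_⟩
  · simpa [descFactorial_succ_self, show n + 2 * n + 1 = 3 * n + 1 by ring] using hbound n le_rfl
  · simpa only [prod_Icc_add_one_sub_eq_descFactorial] using hbound k hk
end
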